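/- arXiv:2203.01020 — 2 statements merged into one kernel-verified Lean document; each statement's English description precedes it below -/
import Mathlib

section
/- Let 1 ≤ p < ∞ and let (X,d,μ) be a metric measure space such that μ is doubling and supports a p-Poincaré inequality, X has the annular chain property at O ∈ X, and X has a weak polar coordinate system (𝕊, σ, {γ_ξ}_{ξ∈𝕊}, h) at O. If Mod_p(\hatΓ^O(𝕊)) > 0, then 𝓡_p(O) < ∞. -/
open MeasureTheory Metric Filter Set
open scoped ENNReal

variable {X : Type*}

section Defs
variable [MetricSpace X]

/-- `γ` is parameterized by arc length on the set `I`: its length (total variation)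
on each subinterval `[a,b] ⊆ I` equals `b - a`. -/
def IsArclengthOn (γ : ℝ → X) (I : Set ℝ) : Prop :=
  ∀ a b : ℝ, a ∈ I → b ∈ I → a ≤ b →
    eVariationOn γ (Set.Icc a b) = ENNReal.ofReal (b - a)

/-- An infinite curve: parameterized by arc length on `[0,∞)`, and its image is not
contained in any ball. -/
def IsInfiniteCurve (γ : ℝ → X) : Prop :=
  IsArclengthOn γ (Set.Ici 0) ∧ ∀ (x : X) (r : ℝ), ¬ (γ '' Set.Ici 0 ⊆ ball x r)

/-- The family `Γ^∞` of all infinite curves in `X`. -/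
def InfiniteCurves (X : Type*) [MetricSpace X] : Set (ℝ → X) :=
  {γ | IsInfiniteCurve γ}

/-- `ρ` is an upper gradient of `u`: for every curve parameterized by arc length on a
compact interval `[0,L]`, `|u(γ 0) - u(γ L)| ≤ ∫_γ ρ ds`. -/
def IsUpperGradient (ρ : X → ℝ≥0∞) (u : X → ℝ) : Prop :=
  ∀ (γ : ℝ → X) (L : ℝ), 0 < L → IsArclengthOn γ (Set.Icc 0 L) →
    ENNReal.ofReal |u (γ 0) - u (γ L)| ≤ ∫⁻ t in Set.Icc (0:ℝ) L, ρ (γ t)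

variable [MeasurableSpace X]

/-- The `p`-modulus of a family of infinite curves. -/
noncomputable def pModulus (μ : Measure X) (p : ℝ) (Γ : Set (ℝ → X)) : ℝ≥0∞ :=
  ⨅ (ρ : X → ℝ≥0∞) (_ : Measurable ρ)
    (_ : ∀ γ ∈ Γ, 1 ≤ ∫⁻ t in Set.Ici (0:ℝ), ρ (γ t)),
    ∫⁻ x, ρ x ^ p ∂μ

/-- Membership in the homogeneous Newtonian space `Ṅ^{1,p}(X)`. -/
def MemHomNewtonian (μ : Measure X) (p : ℝ) (u : X → ℝ) : Prop :=
  LocallyIntegrable u μ ∧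
  ∃ ρ : X → ℝ≥0∞, Measurable ρ ∧ IsUpperGradient ρ u ∧ (∫⁻ x, ρ x ^ p ∂μ) < ∞

/-- Doubling measure: balls have positive finite measure and measure of doubled balls
is controlled. -/
def IsDoublingMeasure (μ : Measure X) : Prop :=
  (∀ (x : X) (r : ℝ), 0 < r → 0 < μ (ball x r) ∧ μ (ball x r) < ∞) ∧
  ∃ C : ℝ≥0∞, 1 ≤ C ∧ ∀ (x : X) (r : ℝ), 0 < r → μ (ball x (2 * r)) ≤ C * μ (ball x r)

/-- `u` is integrable on all balls. -/
def IntegrableOnBalls (μ : Measure X) (u : X → ℝ) : Prop :=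
  ∀ (x : X) (r : ℝ), 0 < r → IntegrableOn u (ball x r) μ

/-- `μ` supports a `p`-Poincaré inequality with scaling factor `lam`. -/
def SupportsPoincare (μ : Measure X) (p lam : ℝ) : Prop :=
  (∀ (x : X) (r : ℝ), 0 < r → 0 < μ (ball x r) ∧ μ (ball x r) < ∞) ∧
  ∃ C : ℝ, 0 < C ∧
    ∀ (x : X) (r : ℝ), 0 < r → ∀ u : X → ℝ, IntegrableOnBalls μ u →
      ∀ ρ : X → ℝ≥0∞, Measurable ρ → IsUpperGradient ρ u →
        (⨍ y in ball x r, |u y - ⨍ z in ball x r, u z ∂μ| ∂μ) ≤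
          C * r * ((⨍⁻ y in ball x (lam * r), ρ y ^ p ∂μ) ^ (1 / p)).toReal

/-- The annular `lam`-chain condition at `O` with explicit constants `c₁, c₂, δ, M`. -/
def AnnularChainConditionWith (O : X) (lam c₁ c₂ δ : ℝ) (M : ℕ) : Prop :=
  ∀ r : ℝ, 0 < r → ∀ x y : X,
    x ∈ ball O r \ ball O (r / 2) → y ∈ ball O r \ ball O (r / 2) →
    ∃ (k : ℕ) (c : ℕ → X), 1 ≤ k ∧ k ≤ M ∧ c 0 = x ∧ c (k - 1) = y ∧
      (∀ i < k, ball (c i) (r / (lam * c₁)) ⊆ ball O (c₂ * r) \ ball O (r / c₂)) ∧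
      (∀ i, i + 1 < k →
        ∃ z : X, ball z (δ * r) ⊆ ball (c i) (r / (lam * c₁)) ∩ ball (c (i + 1)) (r / (lam * c₁)))

/-- The annular `lam`-chain condition at `O`. -/
def AnnularChainCondition (O : X) (lam : ℝ) : Prop :=
  ∃ (c₁ c₂ δ : ℝ) (M : ℕ), 1 ≤ c₁ ∧ 1 ≤ c₂ ∧ 0 < δ ∧
    AnnularChainConditionWith O lam c₁ c₂ δ M

/-- The annular chain property at `O`: the annular `lam`-chain condition holds for all `lam ≥ 1`. -/
def AnnularChainProperty (O : X) : Prop :=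
  ∀ lam : ℝ, 1 ≤ lam → AnnularChainCondition O lam

/-- The annulus `A_{2^j}(O) = B(O,2^{j+1}) \ B(O,2^j)`. -/
def annulusAt (O : X) (j : ℕ) : Set X :=
  ball O (2 ^ (j + 1)) \ ball O (2 ^ j)

/-- The quantity `𝓡_p(O)`. -/
noncomputable def scrR (μ : Measure X) (p : ℝ) (O : X) : ℝ≥0∞ :=
  if p = 1 then ⨆ j : ℕ, ENNReal.ofReal ((2:ℝ) ^ j) * (μ (annulusAt O j))⁻¹
  else ∑' j : ℕ, ENNReal.ofReal ((2:ℝ) ^ j) ^ (p / (p - 1)) * μ (annulusAt O j) ^ (1 / (1 - p))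

/-- The quantity `R_p(h,O)`. -/
noncomputable def Rp (μ : Measure X) (p : ℝ) (h : X → ℝ≥0∞) (O : X) : ℝ≥0∞ :=
  if p = 1 then essSup (fun x => (h x)⁻¹) (μ.restrict (ball O 1)ᶜ)
  else ∫⁻ x in (ball O 1)ᶜ, h x ^ (p / (1 - p)) ∂μ

/-- `(𝕊, σ, {γ_ξ}, h)` is a weak polar coordinate system at `O` with constant `C`. -/
def IsWeakPolarSystem (μ : Measure X) (O : X) {S : Type*} [MeasurableSpace S]
    (σ : Measure S) (γ : S → ℝ → X) (h : X → ℝ≥0∞) (C : ℝ≥0∞) : Prop :=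
  IsProbabilityMeasure σ ∧ (∀ ξ, IsInfiniteCurve (γ ξ)) ∧ (∀ ξ, γ ξ 0 = O) ∧
  Measurable h ∧ (∀ x, h x ≠ ∞) ∧ 0 < C ∧ C ≠ ∞ ∧
  ∀ f : X → ℝ, Integrable f μ →
    (∫⁻ ξ, (∫⁻ t in Set.Ici (0:ℝ), ENNReal.ofReal |f (γ ξ t)| * h (γ ξ t)) ∂σ)
      ≤ C * ∫⁻ x, ENNReal.ofReal |f x| ∂μ

/-- The family `\hatΓ^O(F)` of tails of radial curves indexed by `ξ ∈ F` whose
liminf distance to `O` exceeds `1`. -/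
def hatGamma (O : X) {S : Type*} (γ : S → ℝ → X) (F : Set S) : Set (ℝ → X) :=
  { g | ∃ ξ ∈ F, 1 < Filter.liminf (fun t => dist O (γ ξ t)) Filter.atTop ∧
      ∃ tξ : ℝ, 0 ≤ tξ ∧ dist O (γ ξ tξ) = 1 ∧ (∀ t, tξ < t → 1 < dist O (γ ξ t)) ∧
      g = fun t => γ ξ (t + tξ) }

end Defs

/-!
A tail curve `\hatγ_ξ` starts on the unit sphere, is `1`-Lipschitz and leaves every ball, so
it spends a time interval of length at least `2^j` in every annulus `A_{2^j}(O)`. Hence every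
annular step function `Σ_{j<N} a_j 1_{A_{2^j}(O)}` with `Σ_{j<N} a_j 2^j ≥ 1` is admissible for
`\hatΓ^O(𝕊)`, so `M := Mod_p(\hatΓ^O(𝕊)) ≤ Σ_{j<N} a_j^p μ(A_{2^j}(O))`. For `p = 1`, testing
with a single annulus gives `2^j / μ(A_{2^j}(O)) ≤ M⁻¹`; for `p > 1`, the extremal weights of
Hölder's inequality, `a_j ∝ (2^j / μ(A_{2^j}(O)))^{1/(p-1)}`, give `Σ_{j<N} (2^j)^{p/(p-1)}
μ(A_{2^j}(O))^{1/(1-p)} ≤ M^{-1/(p-1)}` for every `N`.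
-/

lemma ENNReal.rpow_mul_self {x : ℝ≥0∞} (h0 : x ≠ 0) (htop : x ≠ ∞) {y z : ℝ} (h : y + 1 = z) :
    x ^ y * x = x ^ z := by
  rw [← h, ENNReal.rpow_add _ _ h0 htop, ENNReal.rpow_one]

open Function in
lemma rpow_sum_indicator_of_pairwise_disjoint {ι α : Type*} {s : ι → Set α}
    (hs : Pairwise (Disjoint on s)) (t : Finset ι) (a : ι → ℝ≥0∞) {p : ℝ} (hp : 0 < p) (x : α) :
    (∑ j ∈ t, (s j).indicator (fun _ => a j) x) ^ p =
      ∑ j ∈ t, (s j).indicator (fun _ => a j ^ p) x := by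
  by_cases hx : ∃ j ∈ t, x ∈ s j
  · obtain ⟨j, hj, hxj⟩ := hx
    have key : ∀ b : ι → ℝ≥0∞, ∑ i ∈ t, (s i).indicator (fun _ => b i) x = b j := fun b =>
      (Finset.sum_eq_single_of_mem j hj fun i _ hij =>
        indicator_of_notMem (fun hxi => (hs hij).ne_of_mem hxi hxj rfl) _).trans
        (indicator_of_mem hxj _)
    rw [key a, key fun i => a i ^ p]
  · have key : ∀ b : ι → ℝ≥0∞, ∑ i ∈ t, (s i).indicator (fun _ => b i) x = 0 := fun b =>
      Finset.sum_eq_zero fun i hi => indicator_of_notMem (fun hxi => hx ⟨i, hi, hxi⟩) _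
    rw [key a, key fun i => a i ^ p, ENNReal.zero_rpow_of_pos hp]

/-- The interval runs from the last visit of `(-∞, u]` before the first visit `T` of `[v, ∞)`
up to `T`. -/
lemma exists_Ioo_crossing {f : ℝ → ℝ} (hf : LipschitzOnWith 1 f (Ici 0)) {u v T₀ : ℝ}
    (h0 : f 0 ≤ u) (hT₀ : 0 ≤ T₀) (hv : v ≤ f T₀) :
    ∃ s T, 0 ≤ s ∧ s + (v - u) ≤ T ∧ ∀ t ∈ Ioo s T, u < f t ∧ f t < v := by
  have hcont : ∀ b, ContinuousOn f (Icc 0 b) := fun b => hf.continuousOn.mono Icc_subset_Ici_self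
  have hK : IsCompact (Icc 0 T₀ ∩ f ⁻¹' Ici v) := isCompact_Icc.of_isClosed_subset
    ((hcont T₀).preimage_isClosed_of_isClosed isClosed_Icc isClosed_Ici) inter_subset_left
  obtain ⟨T, ⟨⟨hT0, hTT₀⟩, hvT⟩, hTleast⟩ := hK.exists_isLeast ⟨T₀, ⟨hT₀, le_rfl⟩, hv⟩
  have hL : IsCompact (Icc 0 T ∩ f ⁻¹' Iic u) := isCompact_Icc.of_isClosed_subset
    ((hcont T).preimage_isClosed_of_isClosed isClosed_Icc isClosed_Iic) inter_subset_left
  obtain ⟨s, ⟨⟨hs0, hsT⟩, hus⟩, hsgreatest⟩ := hL.exists_isGreatest ⟨0, ⟨le_rfl, hT0⟩, h0⟩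
  refine ⟨s, T, hs0, ?_, fun t ⟨hst, htT⟩ => ⟨?_, ?_⟩⟩
  · have h := hf.dist_le_mul T hT0 s hs0
    rw [NNReal.coe_one, one_mul, Real.dist_eq, Real.dist_eq, abs_of_nonneg (sub_nonneg.2 hsT)] at h
    linarith [le_abs_self (f T - f s), show v ≤ f T from hvT, show f s ≤ u from hus]
  · by_contra! h
    exact (hsgreatest ⟨⟨hs0.trans hst.le, htT.le⟩, h⟩).not_gt hst
  · by_contra! h
    exact (hTleast ⟨⟨hs0.trans hst.le, htT.le.trans hTT₀⟩, h⟩).not_gt htT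

/-- `M` is at most the `p`-modulus of a chain of annuli of widths `w j` and measures `m j`,
computed with finitely supported radial densities. -/
def LeDiscreteModulus (p : ℝ) (w m : ℕ → ℝ≥0∞) (M : ℝ≥0∞) : Prop :=
  ∀ (N : ℕ) (a : ℕ → ℝ≥0∞), 1 ≤ ∑ j ∈ Finset.range N, a j * w j →
    M ≤ ∑ j ∈ Finset.range N, a j ^ p * m j

namespace LeDiscreteModulus

variable {p : ℝ} {w m : ℕ → ℝ≥0∞} {M : ℝ≥0∞}

lemma le_rpow_mul (hM : LeDiscreteModulus p w m M) (hp : 0 < p) {j : ℕ} {c : ℝ≥0∞}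
    (hc : 1 ≤ c * w j) : M ≤ c ^ p * m j := by
  classical
  simpa [ite_mul, ENNReal.zero_rpow_of_pos hp, Finset.sum_ite_eq'] using
    hM (j + 1) (fun i => if i = j then c else 0) (by simpa [ite_mul, Finset.sum_ite_eq'] using hc)

lemma ne_zero (hM : LeDiscreteModulus p w m M) (hp : 0 < p) (hM0 : 0 < M) {j : ℕ}
    (hw : w j ≠ 0) : m j ≠ 0 := by
  intro hm
  have h := hM.le_rpow_mul hp (c := ∞) (by rw [ENNReal.top_mul hw]; exact le_top)
  rw [hm, mul_zero] at h
  exact hM0.ne' (le_zero_iff.1 h)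

lemma mul_inv_le (hM : LeDiscreteModulus 1 w m M) {j : ℕ} (hw0 : w j ≠ 0) (hwtop : w j ≠ ∞) :
    w j * (m j)⁻¹ ≤ M⁻¹ := by
  have h := hM.le_rpow_mul one_pos (c := (w j)⁻¹) (ENNReal.inv_mul_cancel hw0 hwtop).ge
  rw [ENNReal.rpow_one] at h
  calc w j * (m j)⁻¹ = ((w j)⁻¹ * m j)⁻¹ := by
        rw [ENNReal.mul_inv (.inl (ENNReal.inv_ne_zero.2 hwtop)) (.inl (ENNReal.inv_ne_top.2 hw0)),
          inv_inv]
    _ ≤ M⁻¹ := ENNReal.inv_le_inv.2 h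

lemma sum_range_le (hM : LeDiscreteModulus p w m M) (hp : 1 < p) (hM0 : 0 < M)
    (hw0 : ∀ j, w j ≠ 0) (hwtop : ∀ j, w j ≠ ∞) (hmtop : ∀ j, m j ≠ ∞) (N : ℕ) :
    ∑ j ∈ Finset.range N, w j ^ (p / (p - 1)) * m j ^ (1 / (1 - p)) ≤ M⁻¹ ^ (p - 1)⁻¹ := by
  have hp1 : p - 1 ≠ 0 := sub_ne_zero.2 hp.ne'
  have hp1' : 1 - p ≠ 0 := sub_ne_zero.2 hp.ne
  have hm0 : ∀ j, m j ≠ 0 := fun j => hM.ne_zero (by linarith) hM0 (hw0 j)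
  set b : ℕ → ℝ≥0∞ := fun j => w j ^ (p / (p - 1)) * m j ^ (1 / (1 - p))
  set c : ℕ → ℝ≥0∞ := fun j => w j ^ (1 / (p - 1)) * m j ^ (1 / (1 - p))
  set S := ∑ j ∈ Finset.range N, b j
  have hcw : ∀ j, c j * w j = b j := fun j => by
    rw [mul_right_comm, ENNReal.rpow_mul_self (hw0 j) (hwtop j) (z := p / (p - 1))
      (by field_simp; ring)]
  have hcm : ∀ j, c j ^ p * m j = b j := fun j => by
    rw [ENNReal.mul_rpow_of_nonneg _ _ (by linarith), ← ENNReal.rpow_mul, ← ENNReal.rpow_mul,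
      mul_assoc, ENNReal.rpow_mul_self (hm0 j) (hmtop j) (z := 1 / (1 - p)) (by field_simp; ring)]
    congr 2
    field_simp
  rcases eq_or_ne S 0 with hS0 | hS0
  · rw [hS0]; exact zero_le
  have hStop : S ≠ ∞ := ENNReal.sum_ne_top.2 fun j _ =>
    ENNReal.mul_ne_top (ENNReal.rpow_ne_top_of_ne_zero (hw0 j) (hwtop j))
      (ENNReal.rpow_ne_top_of_ne_zero (hm0 j) (hmtop j))
  have hadm : 1 ≤ ∑ j ∈ Finset.range N, c j / S * w j := by
    simp_rw [div_eq_mul_inv, mul_right_comm _ S⁻¹, hcw, ← Finset.sum_mul]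
    exact (ENNReal.mul_inv_cancel hS0 hStop).ge
  have henergy : ∑ j ∈ Finset.range N, (c j / S) ^ p * m j = (S ^ (p - 1))⁻¹ := by
    simp_rw [ENNReal.div_rpow_of_nonneg _ _ (by linarith : (0:ℝ) ≤ p), div_eq_mul_inv,
      mul_right_comm _ (S ^ p)⁻¹, hcm, ← Finset.sum_mul]
    rw [ENNReal.rpow_sub _ _ hS0 hStop, ENNReal.rpow_one, ENNReal.inv_div (.inl hStop) (.inl hS0),
      div_eq_mul_inv]
  have h := hM N _ hadm
  rw [henergy, ENNReal.le_inv_iff_le_inv] at h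
  exact (ENNReal.le_rpow_inv_iff (by linarith)).2 h

end LeDiscreteModulus

section Curves

variable [MetricSpace X]

lemma IsArclengthOn.lipschitzOnWith {γ : ℝ → X} {I : Set ℝ} (hγ : IsArclengthOn γ I) :
    LipschitzOnWith 1 γ I := by
  refine LipschitzOnWith.of_dist_le_mul fun a ha b hb => ?_
  wlog hab : a ≤ b generalizing a b
  · rw [dist_comm, dist_comm a]; exact this b hb a ha (le_of_not_ge hab)
  have h := eVariationOn.edist_le γ (left_mem_Icc.2 hab) (right_mem_Icc.2 hab)
  rw [hγ a b ha hb hab, edist_dist] at h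
  rw [NNReal.coe_one, one_mul, Real.dist_eq, abs_sub_comm, abs_of_nonneg (sub_nonneg.2 hab)]
  exact (ENNReal.ofReal_le_ofReal_iff (sub_nonneg.2 hab)).1 h

lemma IsInfiniteCurve.exists_le_dist_add {γ : ℝ → X} (hγ : IsInfiniteCurve γ) (O : X) {τ : ℝ}
    (R : ℝ) : ∃ t, 0 ≤ t ∧ R ≤ dist O (γ (t + τ)) := by
  obtain ⟨_, ⟨u, hu, rfl⟩, hout⟩ := not_subset.1 (hγ.2 O (max R (dist O (γ 0) + τ) + 1))
  rw [mem_ball', not_lt] at hout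
  have hτu : τ < u := by
    by_contra! huτ
    have hdist : dist (γ 0) (γ u) ≤ u := by
      simpa [abs_of_nonneg (mem_Ici.1 hu)] using hγ.1.lipschitzOnWith.dist_le_mul 0 self_mem_Ici u hu
    linarith [dist_triangle O (γ 0) (γ u), le_max_right R (dist O (γ 0) + τ)]
  exact ⟨u - τ, by linarith, by simpa using (le_max_left R _).trans (by linarith)⟩

noncomputable def annularStep (O : X) (N : ℕ) (a : ℕ → ℝ≥0∞) (x : X) : ℝ≥0∞ :=
  ∑ j ∈ Finset.range N, (annulusAt O j).indicator (fun _ => a j) x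

open Function in
lemma pairwise_disjoint_annulusAt (O : X) : Pairwise (Disjoint on annulusAt O) := by
  intro j k hjk
  wlog hlt : j < k generalizing j k
  · exact (this hjk.symm (lt_of_le_of_ne (not_lt.1 hlt) hjk.symm)).symm
  exact disjoint_left.2 fun x hx hx' =>
    hx'.2 (ball_subset_ball (pow_le_pow_right₀ one_le_two hlt) hx.1)

lemma exists_Ioo_subset_preimage_annulusAt {g : ℝ → X} {O : X}
    (hg : LipschitzOnWith 1 g (Ici 0)) (h0 : dist O (g 0) = 1)
    (hunb : ∀ R, ∃ t, 0 ≤ t ∧ R ≤ dist O (g t)) (j : ℕ) :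
    ∃ s T, 0 ≤ s ∧ s + 2 ^ j ≤ T ∧ Ioo s T ⊆ g ⁻¹' annulusAt O j := by
  obtain ⟨T₀, hT₀, hv⟩ := hunb (2 ^ (j + 1))
  have hf : LipschitzOnWith 1 (fun t => dist O (g t)) (Ici 0) := by
    simpa [Function.comp_def] using (LipschitzWith.dist_right O).comp_lipschitzOnWith hg
  obtain ⟨s, T, hs, hsT, hmem⟩ :=
    exists_Ioo_crossing hf (u := 2 ^ j) (h0.trans_le (one_le_pow₀ one_le_two)) hT₀ hv
  refine ⟨s, T, hs, by rw [pow_succ] at hsT; linarith, fun t ht => ?_⟩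
  obtain ⟨hlow, hhigh⟩ := hmem t ht
  exact ⟨mem_ball'.2 hhigh, fun h => (mem_ball'.1 h).not_gt hlow⟩

lemma exists_Ioo_subset_preimage_annulusAt_of_mem_hatGamma {S : Type*} {γ : S → ℝ → X}
    (hγ : ∀ ξ, IsInfiniteCurve (γ ξ)) {O : X} {g : ℝ → X} (hg : g ∈ hatGamma O γ univ)
    (j : ℕ) : ∃ s T, 0 ≤ s ∧ s + 2 ^ j ≤ T ∧ Ioo s T ⊆ g ⁻¹' annulusAt O j := by
  obtain ⟨ξ, -, -, τ, hτ, h1, -, rfl⟩ := hg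
  refine exists_Ioo_subset_preimage_annulusAt ?_ (by simpa using h1)
    ((hγ ξ).exists_le_dist_add O) j
  refine LipschitzOnWith.of_dist_le_mul fun a (ha : 0 ≤ a) b (hb : 0 ≤ b) => ?_
  simpa using (hγ ξ).1.lipschitzOnWith.dist_le_mul (a + τ) (by simp only [mem_Ici]; linarith)
    (b + τ) (by simp only [mem_Ici]; linarith)

lemma one_le_lintegral_annularStep {g : ℝ → X} {O : X} {N : ℕ} {a : ℕ → ℝ≥0∞}
    (hcross : ∀ j, ∃ s T, 0 ≤ s ∧ s + 2 ^ j ≤ T ∧ Ioo s T ⊆ g ⁻¹' annulusAt O j)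
    (ha : 1 ≤ ∑ j ∈ Finset.range N, a j * ENNReal.ofReal (2 ^ j)) :
    1 ≤ ∫⁻ t in Ici 0, annularStep O N a (g t) := by
  choose s T hs hsT hsub using hcross
  calc 1 ≤ ∑ j ∈ Finset.range N, a j * ENNReal.ofReal (2 ^ j) := ha
    _ ≤ ∑ j ∈ Finset.range N, ∫⁻ t in Ici 0, (Ioo (s j) (T j)).indicator (fun _ => a j) t := by
      gcongr with j
      rw [lintegral_indicator_const measurableSet_Ioo, Measure.restrict_apply measurableSet_Ioo,
        inter_eq_left.2 fun t ht => mem_Ici.2 ((hs j).trans ht.1.le), Real.volume_Ioo]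
      gcongr
      linarith [hsT j]
    _ = ∫⁻ t in Ici 0, ∑ j ∈ Finset.range N, (Ioo (s j) (T j)).indicator (fun _ => a j) t :=
      (lintegral_finsetSum _ fun j _ => measurable_const.indicator measurableSet_Ioo).symm
    _ ≤ ∫⁻ t in Ici 0, annularStep O N a (g t) :=
      lintegral_mono fun t => Finset.sum_le_sum fun j _ =>
        indicator_le_indicator_of_subset (hsub j) (fun _ => zero_le) t

end Curves

section Modulus

variable [MeasurableSpace X]

lemma pModulus_le_lintegral (μ : Measure X) (p : ℝ) {Γ : Set (ℝ → X)} {ρ : X → ℝ≥0∞}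
    (hρ : Measurable ρ) (hadm : ∀ g ∈ Γ, 1 ≤ ∫⁻ t in Ici 0, ρ (g t)) :
    pModulus μ p Γ ≤ ∫⁻ x, ρ x ^ p ∂μ :=
  iInf₂_le_of_le ρ hρ (iInf_le _ hadm)

variable [MetricSpace X]

lemma IsDoublingMeasure.measure_annulusAt_ne_top {μ : Measure X} (hμ : IsDoublingMeasure μ)
    (O : X) (j : ℕ) : μ (annulusAt O j) ≠ ∞ :=
  ne_top_of_le_ne_top (hμ.1 O _ (by positivity)).2.ne (measure_mono sdiff_subset)

variable [OpensMeasurableSpace X]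

lemma measurableSet_annulusAt (O : X) (j : ℕ) : MeasurableSet (annulusAt O j) :=
  measurableSet_ball.diff measurableSet_ball

lemma measurable_annularStep (O : X) (N : ℕ) (a : ℕ → ℝ≥0∞) : Measurable (annularStep O N a) :=
  Finset.measurable_sum _ fun j _ => measurable_const.indicator (measurableSet_annulusAt O j)

lemma lintegral_annularStep_rpow (μ : Measure X) (O : X) (N : ℕ) (a : ℕ → ℝ≥0∞) {p : ℝ}
    (hp : 0 < p) :
    ∫⁻ x, annularStep O N a x ^ p ∂μ = ∑ j ∈ Finset.range N, a j ^ p * μ (annulusAt O j) := by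
  simp_rw [annularStep, rpow_sum_indicator_of_pairwise_disjoint (pairwise_disjoint_annulusAt O)
    _ _ hp]
  rw [lintegral_finsetSum _ fun j _ => measurable_const.indicator (measurableSet_annulusAt O j)]
  simp_rw [lintegral_indicator_const (measurableSet_annulusAt O _)]

lemma leDiscreteModulus_pModulus_hatGamma (μ : Measure X) {p : ℝ} (hp : 0 < p) (O : X)
    {S : Type*} {γ : S → ℝ → X} (hγ : ∀ ξ, IsInfiniteCurve (γ ξ)) :
    LeDiscreteModulus p (fun j => ENNReal.ofReal (2 ^ j)) (fun j => μ (annulusAt O j))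
      (pModulus μ p (hatGamma O γ univ)) := fun N a ha => by
  rw [← lintegral_annularStep_rpow μ O N a hp]
  exact pModulus_le_lintegral μ p (measurable_annularStep O N a) fun g hg =>
    one_le_lintegral_annularStep (exists_Ioo_subset_preimage_annulusAt_of_mem_hatGamma hγ hg) ha

end Modulus

theorem scrR_finite_of_modulus_positive_general {X : Type*} [MetricSpace X] [MeasurableSpace X]
    [BorelSpace X]
    (μ : Measure X) (p : ℝ) (hp : 1 ≤ p)
    (hdoub : IsDoublingMeasure μ)
    (O : X)
    {S : Type*} [MeasurableSpace S] (σ : Measure S) (γ : S → ℝ → X)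
    (h : X → ℝ≥0∞) (C : ℝ≥0∞) (hpolar : IsWeakPolarSystem μ O σ γ h C)
    (hmod : 0 < pModulus μ p (hatGamma O γ (Set.univ : Set S))) :
    scrR μ p O < ∞ := by
  have hM := leDiscreteModulus_pModulus_hatGamma μ (by linarith) O hpolar.2.1
  have hw0 (j : ℕ) : ENNReal.ofReal ((2 : ℝ) ^ j) ≠ 0 := (ENNReal.ofReal_pos.2 (by positivity)).ne'
  rw [scrR]
  split_ifs with hp1
  · subst hp1
    exact (iSup_le fun j => hM.mul_inv_le (hw0 j) ENNReal.ofReal_ne_top).trans_lt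
      (ENNReal.inv_lt_top.2 hmod)
  · exact (ENNReal.tsum_le_of_sum_range_le <| hM.sum_range_le (hp.lt_of_ne' hp1) hmod hw0
      (fun _ => ENNReal.ofReal_ne_top) (hdoub.measure_annulusAt_ne_top O)).trans_lt
      (ENNReal.rpow_lt_top_of_nonneg (inv_nonneg.2 (by linarith)) (ENNReal.inv_ne_top.2 hmod.ne'))

/-- positive modulus of the tail family implies `𝓡_p(O) < ∞`. -/
theorem scrR_finite_of_modulus_positive {X : Type*} [MetricSpace X] [MeasurableSpace X]
    [BorelSpace X]
    (μ : Measure X) (p : ℝ) (hp : 1 ≤ p)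
    (hdoub : IsDoublingMeasure μ)
    (hPI : ∃ lam : ℝ, 1 ≤ lam ∧ SupportsPoincare μ p lam)
    (O : X) (hchain : AnnularChainProperty O)
    {S : Type*} [MeasurableSpace S] (σ : Measure S) (γ : S → ℝ → X)
    (h : X → ℝ≥0∞) (C : ℝ≥0∞) (hpolar : IsWeakPolarSystem μ O σ γ h C)
    (hmod : 0 < pModulus μ p (hatGamma O γ (Set.univ : Set S))) :
    scrR μ p O < ∞ :=
  scrR_finite_of_modulus_positive_general μ p hp hdoub O σ γ h C hpolar hmod
end

section
/- Let μ be a doubling measure on a metric space (X,d), let O ∈ X, and suppose X is annularly C-quasiconvex at O for some C ≥ 1, i.e., for every r > 0, every pair of points x, y ∈ B(O,r) ∖ B(O,r/2) can be joined by a curve of length at most C·d(x,y) contained in B(O,Cr) ∖ B(O,r/C). Then X has the annular chain property at O. -/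
/-!
Cut a quasiconvex curve from `x` to `y` into pieces of length at most half the radius `ρ` of the
chain balls. The sample points stay in the annulus `B(O, C r) ∖ B(O, r / C)`, so the balls of
radius `ρ ≤ r / (4 C)` around them lie in `B(O, 2 C r) ∖ B(O, r / (2 C))`, consecutive balls share
the ball of radius `ρ / 2` around the earlier centre, and since the curve has length at most
`C d(x, y) < 2 C r` the number of balls is bounded independently of `r`.
-/

open MeasureTheory Metric Filter Set
open scoped ENNReal

variable {X : Type*}

section

variable [MetricSpace X]

def IsAnnularQuasiconvexAt (O : X) (C : ℝ) : Prop :=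
  ∀ r : ℝ, 0 < r → ∀ x y : X,
    x ∈ ball O r \ ball O (r / 2) → y ∈ ball O r \ ball O (r / 2) →
    ∃ (L : ℝ) (γ : ℝ → X), 0 ≤ L ∧ L ≤ C * dist x y ∧
      IsArclengthOn γ (Icc 0 L) ∧ γ 0 = x ∧ γ L = y ∧
      γ '' Icc 0 L ⊆ ball O (C * r) \ ball O (r / C)

theorem IsArclengthOn.dist_le {γ : ℝ → X} {I : Set ℝ} (hγ : IsArclengthOn γ I) {a b : ℝ}
    (ha : a ∈ I) (hb : b ∈ I) (hab : a ≤ b) : dist (γ a) (γ b) ≤ b - a := by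
  have h := eVariationOn.edist_le γ (left_mem_Icc.2 hab) (right_mem_Icc.2 hab)
  rwa [hγ a b ha hb hab, edist_dist, ENNReal.ofReal_le_ofReal_iff (by linarith)] at h

/-- Sampling an arc-length parametrized curve at the times `min (i * s) L`. -/
theorem IsArclengthOn.exists_chain {γ : ℝ → X} {L s : ℝ} (hγ : IsArclengthOn γ (Icc 0 L))
    (hL : 0 ≤ L) (hs : 0 < s) :
    ∃ c : ℕ → X, c 0 = γ 0 ∧ c ⌈L / s⌉₊ = γ L ∧ (∀ i, c i ∈ γ '' Icc 0 L) ∧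
      ∀ i, dist (c i) (c (i + 1)) ≤ s := by
  set t : ℕ → ℝ := fun i => min (i * s) L
  have ht : ∀ i, t i ∈ Icc 0 L := fun i => ⟨le_min (by positivity) hL, min_le_right _ _⟩
  refine ⟨γ ∘ t, by simp [t, hL], ?_, fun i => mem_image_of_mem γ (ht i), fun i => ?_⟩
  · have : L ≤ ⌈L / s⌉₊ * s := (div_le_iff₀ hs).1 (Nat.le_ceil _)
    simp [t, this]
  · have hmono : t i ≤ t (i + 1) := min_le_min_right L (by push_cast; linarith)
    have hstep : t (i + 1) ≤ t i + s := by
      calc t (i + 1) = min (i * s + s) L := by simp only [t]; push_cast; ring_nf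
        _ ≤ min (i * s + s) (L + s) := min_le_min_left _ (by linarith)
        _ = t i + s := min_add_add_right _ _ _
    exact (hγ.dist_le (ht i) (ht (i + 1)) hmono).trans (by linarith)

theorem ball_subset_ball_inter_ball {x y : X} {ρ s : ℝ} (h : dist x y ≤ s) :
    ball x (ρ - s) ⊆ ball x ρ ∩ ball y ρ :=
  subset_inter (ball_subset_ball (by linarith [dist_nonneg (x := x) (y := y)]))
    (ball_subset_ball' (by linarith))

theorem ball_subset_ball_diff_ball {O p : X} {a b ρ : ℝ} (hp : p ∈ ball O b \ ball O a) :
    ball p ρ ⊆ ball O (b + ρ) \ ball O (a - ρ) := by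
  intro w hw
  rw [mem_ball] at hw
  have hpb : dist p O < b := hp.1
  have hpa : a ≤ dist p O := not_lt.1 hp.2
  refine ⟨mem_ball.2 ?_, fun hwa => ?_⟩
  · linarith [dist_triangle w p O]
  · linarith [dist_triangle p w O, dist_comm p w, mem_ball.1 hwa]

theorem annularChainConditionWith_of_isAnnularQuasiconvexAt {O : X} {C lam : ℝ} (hC : 1 ≤ C)
    (hlam : 1 ≤ lam) (hqc : IsAnnularQuasiconvexAt O C) :
    AnnularChainConditionWith O lam (4 * C) (2 * C) (1 / (8 * lam * C)) (⌈16 * lam * C ^ 2⌉₊ + 1) := by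
  have hC0 : 0 < C := by linarith
  have hlam0 : 0 < lam := by linarith
  intro r hr x y hx hy
  obtain ⟨L, γ, hL0, hLxy, hγ, rfl, rfl, himg⟩ := hqc r hr x y hx hy
  set ρ := r / (lam * (4 * C)) with hρ
  have hρ0 : 0 < ρ := by positivity
  obtain ⟨c, hc0, hcn, hcimg, hcstep⟩ := hγ.exists_chain hL0 (half_pos hρ0)
  refine ⟨⌈L / (ρ / 2)⌉₊ + 1, c, by omega, ?_, hc0, by simpa using hcn, fun i _ => ?_,
    fun i _ => ⟨c i, ?_⟩⟩
  · have hdist : dist (γ 0) (γ L) < 2 * r := by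
      linarith [dist_triangle_right (γ 0) (γ L) O, mem_ball.1 hx.1, mem_ball.1 hy.1]
    have hcount : L / (ρ / 2) ≤ 16 * lam * C ^ 2 := by
      rw [div_le_iff₀ (half_pos hρ0), hρ]
      field_simp
      nlinarith
    have := Nat.ceil_le_ceil hcount
    omega
  · have hρr : ρ ≤ r / (4 * C) :=
      div_le_div_of_nonneg_left hr.le (by positivity) (by nlinarith)
    refine (ball_subset_ball_diff_ball (himg (hcimg i))).trans
      (sdiff_subset_sdiff (ball_subset_ball ?_) (ball_subset_ball ?_))
    · have : r / (4 * C) ≤ C * r := by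
        rw [div_le_iff₀ (by positivity)]; nlinarith [mul_le_mul hC hC zero_le_one hC0.le]
      linarith
    · have : r / (2 * C) + r / (4 * C) ≤ r / C := by
        field_simp; linarith
      linarith
  · convert ball_subset_ball_inter_ball (ρ := ρ) (hcstep i) using 2
    rw [hρ]; field_simp; ring

end

theorem annular_chain_of_quasiconvex_general {X : Type*} [MetricSpace X]
    (O : X)
    (C : ℝ) (hC : 1 ≤ C)
    (hqc : ∀ r : ℝ, 0 < r → ∀ x y : X,
      x ∈ ball O r \ ball O (r / 2) → y ∈ ball O r \ ball O (r / 2) →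
      ∃ (L : ℝ) (γ : ℝ → X), 0 ≤ L ∧ L ≤ C * dist x y ∧
        IsArclengthOn γ (Set.Icc 0 L) ∧ γ 0 = x ∧ γ L = y ∧
        γ '' Set.Icc 0 L ⊆ ball O (C * r) \ ball O (r / C)) :
    AnnularChainProperty O := by
  intro lam hlam
  have hδ : 0 < 1 / (8 * lam * C) := by
    have : 0 < lam := by linarith
    have : 0 < C := by linarith
    positivity
  exact ⟨_, _, _, _, by linarith, by linarith, hδ,
    annularChainConditionWith_of_isAnnularQuasiconvexAt hC hlam hqc⟩

/-- annular quasiconvexity implies the annular chain property. -/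
theorem annular_chain_of_quasiconvex {X : Type*} [MetricSpace X] [MeasurableSpace X]
    (μ : Measure X) (hdoub : IsDoublingMeasure μ) (O : X)
    (C : ℝ) (hC : 1 ≤ C)
    (hqc : ∀ r : ℝ, 0 < r → ∀ x y : X,
      x ∈ ball O r \ ball O (r / 2) → y ∈ ball O r \ ball O (r / 2) →
      ∃ (L : ℝ) (γ : ℝ → X), 0 ≤ L ∧ L ≤ C * dist x y ∧
        IsArclengthOn γ (Set.Icc 0 L) ∧ γ 0 = x ∧ γ L = y ∧
        γ '' Set.Icc 0 L ⊆ ball O (C * r) \ ball O (r / C)) :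
    AnnularChainProperty O :=
  annular_chain_of_quasiconvex_general O C hC hqc
end
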